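/- Let w be a square-free word over the ternary alphabet {0,1,2} of length n = |w|. If p and q are non-critical positions of w lying on opposite sides of the middle, i.e. p < n/2 < q, then q − p ≥ n/4. -/

import Mathlib

/-!
At a non-critical position `p` the local period `r` is smaller than the period of `w`. Hence its
repetition word can neither fit inside `w` on both sides of `p` (that would be a square) nor
overhang both ends of `w` (then `r` would be a period). For `p < n/2` it overhangs exactly the
left end, so the prefix of length `p + r` has period `r`; symmetrically, for `q > n/2` the suffix
starting at `q - s` has period `s`. If `q - p < n/4` these overlap so much that `|r - s|` is a local
period fitting on both sides of `p` (if `s < r`) or of `q` (if `r < s`), a square, while `r = s`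
would be a period of `w`.
-/

namespace CritFact

/-- A word is square-free if it contains no factor `v ++ v` with `v` nonempty. -/
def SqFree {α : Type*} (w : List α) : Prop :=
  ∀ v : List α, v ≠ [] → ¬ (v ++ v) <:+: w

/-- A position in `w` is an integer `p` with `1 ≤ p < |w|`. -/
def IsPos {α : Type*} (w : List α) (p : ℕ) : Prop :=
  1 ≤ p ∧ p < w.length

/-- `u` is a repetition word of `w` at position `p` (with `w = x ++ y`, `|x| = p`):
`u` is nonempty, one of `u`, `x` is a suffix of the other, and one of `u`, `y` is a
prefix of the other. -/
def IsRepWord {α : Type*} (w : List α) (p : ℕ) (u : List α) : Prop :=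
  u ≠ [] ∧ (u <:+ w.take p ∨ w.take p <:+ u) ∧ (u <+: w.drop p ∨ w.drop p <+: u)

/-- The minimal local period of `w` at position `p`. -/
noncomputable def locPer {α : Type*} (w : List α) (p : ℕ) : ℕ :=
  sInf {n | ∃ u : List α, IsRepWord w p u ∧ u.length = n}

/-- `q` is a period of `w` if `q > 0` and `w[i] = w[i+q]` whenever both are defined. -/
def HasPeriod {α : Type*} (w : List α) (q : ℕ) : Prop :=
  0 < q ∧ ∀ i : ℕ, i + q < w.length → w[i]? = w[i + q]?

/-- The minimal period of `w`. -/
noncomputable def per {α : Type*} (w : List α) : ℕ :=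
  sInf {q | HasPeriod w q}

/-- A position `p` of `w` is critical if the minimal local period at `p` equals
the global period of `w`. -/
def IsCritical {α : Type*} (w : List α) (p : ℕ) : Prop :=
  IsPos w p ∧ locPer w p = per w

open Classical in
/-- `eta w` is the number of critical positions of `w`. -/
noncomputable def eta {α : Type*} (w : List α) : ℕ :=
  ((Finset.Ico 1 w.length).filter (fun p => IsCritical w p)).card

/-- A word is unbordered if no nonempty proper prefix is also a suffix. -/
def Unbordered {α : Type*} (w : List α) : Prop :=
  ∀ v : List α, v ≠ [] → v ≠ w → ¬ (v <+: w ∧ v <:+ w)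

/-- Ternary words. -/
abbrev Word := List (Fin 3)

/-- Thue's morphism `τ(0) = 012`, `τ(1) = 02`, `τ(2) = 1`. -/
def tau (a : Fin 3) : Word :=
  if a = 0 then [0, 1, 2] else if a = 1 then [0, 2] else [1]

/-- The morphism `τ` applied to a word. -/
def tauW (w : Word) : Word := (w.map tau).flatten

/-- The infinite fixed point `m = 012021012102012⋯` of `τ` starting with `0`. -/
def mInf (n : ℕ) : Fin 3 := (tauW^[n + 1] [0]).getD n 0

/-- `u` is a (finite) factor of the infinite word `m`. -/
def FactorOfM (u : Word) : Prop :=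
  ∃ i : ℕ, u = (List.range u.length).map (fun j => mInf (i + j))

/-- `u` is a factor of `m` occurring (starting) after position `i₀`. -/
def FactorOfMAfter (u : Word) (i₀ : ℕ) : Prop :=
  ∃ i : ℕ, i₀ ≤ i ∧ u = (List.range u.length).map (fun j => mInf (i + j))

/-- `mWord n = τ^{2n-1}(0) · τ^{2n-3}(0) ⋯ τ³(0) · τ(0)`. -/
def mWord : ℕ → Word
  | 0 => []
  | n + 1 => tauW^[2 * n + 1] [0] ++ mWord n

/-- The word `w_x = 0x02x10x02x0`. -/
def wx (x : Word) : Word :=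
  [0] ++ x ++ [0, 2] ++ x ++ [1, 0] ++ x ++ [0, 2] ++ x ++ [0]

end CritFact

namespace List

variable {α : Type*} {l₁ l₂ l₃ l₄ : List α}

theorem prefix_or_prefix_iff_getElem? :
    l₁ <+: l₂ ∨ l₂ <+: l₁ ↔ ∀ i, i < l₁.length → i < l₂.length → l₁[i]? = l₂[i]? := by
  constructor
  · rintro (h | h) i hi₁ hi₂
    · rw [prefix_iff_getElem?.mp h i hi₁, getElem?_eq_getElem hi₁]
    · rw [prefix_iff_getElem?.mp h i hi₂, getElem?_eq_getElem hi₂]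
  · intro h
    rcases le_total l₁.length l₂.length with hle | hle
    · exact .inl <| prefix_iff_getElem?.mpr fun i hi => by
        rw [← h i hi (by omega), getElem?_eq_getElem hi]
    · exact .inr <| prefix_iff_getElem?.mpr fun i hi => by
        rw [h i (by omega) hi, getElem?_eq_getElem hi]

theorem getElem?_eq_of_suffix_or_suffix (h : l₁ <:+ l₂ ∨ l₂ <:+ l₁) {i : ℕ}
    (hi : i < l₁.length) (hi' : l₁.length ≤ i + l₂.length) :
    l₁[i]? = l₂[i + l₂.length - l₁.length]? := by
  rcases h with h | h
  · rw [(suffix_iff_getElem?.mp h).2 i hi, getElem?_eq_getElem hi]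
  · have hk : i + l₂.length - l₁.length < l₂.length := by omega
    have := (suffix_iff_getElem?.mp h).2 _ hk
    rw [show i + l₂.length - l₁.length + l₁.length - l₂.length = i by omega] at this
    rw [this, getElem?_eq_getElem hk]

theorem IsSuffix.append_infix_append (h₁ : l₁ <:+ l₂) (h₂ : l₃ <+: l₄) :
    l₁ ++ l₃ <:+: l₂ ++ l₄ := by
  obtain ⟨a, rfl⟩ := h₁
  obtain ⟨b, rfl⟩ := h₂
  exact ⟨a, b, by simp⟩

end List

namespace CritFact

variable {α : Type*} {w : List α} {p q r s : ℕ}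

/-- The letter-wise form of `w` having a repetition word of length `r` at position `p`. -/
def IsLocalPeriod (w : List α) (p r : ℕ) : Prop :=
  0 < r ∧ ∀ j, j < p → p ≤ j + r → j + r < w.length → w[j]? = w[j + r]?

theorem HasPeriod.isLocalPeriod (h : HasPeriod w r) : IsLocalPeriod w p r :=
  ⟨h.1, fun j _ _ hj => h.2 j hj⟩

theorem IsLocalPeriod.hasPeriod (h : IsLocalPeriod w p r) (hpr : p ≤ r)
    (hrn : w.length ≤ p + r) : HasPeriod w r :=
  ⟨h.1, fun j hj => h.2 j (by omega) (by omega) hj⟩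

theorem IsRepWord.isLocalPeriod {u : List α} (hu : IsRepWord w p u) (hp : p ≤ w.length) :
    IsLocalPeriod w p u.length := by
  obtain ⟨hne, hsuf, hpre⟩ := hu
  refine ⟨List.length_pos_iff.mpr hne, fun j hjp hpj hjn => ?_⟩
  have hx : (w.take p).length = p := by simp [hp]
  have hy : (w.drop p).length = w.length - p := List.length_drop
  calc w[j]? = (w.take p)[j]? := by rw [List.getElem?_take, if_pos hjp]
    _ = u[j + u.length - p]? := by
      rw [List.getElem?_eq_of_suffix_or_suffix hsuf.symm (by omega) (by omega), hx]
    _ = (w.drop p)[j + u.length - p]? :=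
      List.prefix_or_prefix_iff_getElem?.mp hpre _ (by omega) (by omega)
    _ = w[j + u.length]? := by rw [List.getElem?_drop]; congr 1; omega

-- The repetition word reads `w` forwards from `p` and ends with the `min p r` letters before `p`.
theorem IsLocalPeriod.exists_isRepWord (h : IsLocalPeriod w p r) (hp : p ≤ w.length)
    (hr : r ≤ w.length) : ∃ u, IsRepWord w p u ∧ u.length = r := by
  set u := (w.drop p).take (r - p) ++ (w.take p).drop (p - r)
  have hfst : ((w.drop p).take (r - p)).length = r - p := by simp; omega
  have hu : u.length = r := by simp [u]; omega
  refine ⟨u, ⟨List.ne_nil_of_length_pos (hu ▸ h.1), ?_, ?_⟩, hu⟩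
  · rcases le_total r p with hrp | hpr
    · left
      simp only [u, Nat.sub_eq_zero_of_le hrp, List.take_zero, List.nil_append]
      exact List.drop_suffix _ _
    · right
      simp only [u, Nat.sub_eq_zero_of_le hpr, List.drop_zero]
      exact List.suffix_append _ _
  · refine List.prefix_or_prefix_iff_getElem?.mpr fun i hi hin => ?_
    rw [hu] at hi
    rw [List.length_drop] at hin
    rw [List.getElem?_drop]
    rcases lt_or_ge i (r - p) with hip | hip
    · rw [List.getElem?_append_left (by omega), List.getElem?_take, if_pos hip,
        List.getElem?_drop]
    · rw [List.getElem?_append_right (by omega), hfst, List.getElem?_drop, List.getElem?_take,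
        if_pos (by omega), h.2 _ (by omega) (by omega) (by omega)]
      congr 1
      omega

theorem hasPeriod_length (hw : w ≠ []) : HasPeriod w w.length :=
  ⟨List.length_pos_iff.mpr hw, fun _ hi => absurd hi (by omega)⟩

theorem hasPeriod_per (hw : w ≠ []) : HasPeriod w (per w) :=
  Nat.sInf_mem (s := {q | HasPeriod w q}) ⟨_, hasPeriod_length hw⟩

theorem per_le_length (hw : w ≠ []) : per w ≤ w.length :=
  Nat.sInf_le (hasPeriod_length hw)

theorem not_hasPeriod_of_lt_per (h : r < per w) : ¬ HasPeriod w r :=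
  Nat.notMem_of_lt_sInf h

theorem locPer_le_of_isLocalPeriod (h : IsLocalPeriod w p r) (hp : p ≤ w.length)
    (hr : r ≤ w.length) : locPer w p ≤ r :=
  Nat.sInf_le (h.exists_isRepWord hp hr)

theorem isLocalPeriod_locPer (hp : p < w.length) : IsLocalPeriod w p (locPer w p) := by
  have hlen : IsLocalPeriod w p w.length := ⟨by omega, fun _ _ _ hj => absurd hj (by omega)⟩
  obtain ⟨u, hu, hul⟩ : locPer w p ∈ {n | ∃ u, IsRepWord w p u ∧ u.length = n} :=
    Nat.sInf_mem ⟨_, hlen.exists_isRepWord hp.le le_rfl⟩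
  exact hul ▸ hu.isLocalPeriod hp.le

theorem locPer_lt_per_of_not_isCritical (hp : IsPos w p) (hnc : ¬ IsCritical w p) :
    locPer w p < per w := by
  have hw : w ≠ [] := List.ne_nil_of_length_pos (by have := hp.2; omega)
  have hle : locPer w p ≤ per w :=
    locPer_le_of_isLocalPeriod (hasPeriod_per hw).isLocalPeriod hp.2.le (per_le_length hw)
  exact lt_of_le_of_ne hle fun h => hnc ⟨hp, h⟩

-- Otherwise the `r` letters before `p` and the `r` letters after it would form a square.
theorem SqFree.lt_or_lt_of_isLocalPeriod (hsf : SqFree w) (h : IsLocalPeriod w p r) :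
    p < r ∨ w.length < p + r := by
  by_contra! hfit
  set u := (w.take p).drop (p - r)
  set v := (w.drop p).take r
  have hu : u.length = r := by simp [u]; omega
  have hv : v.length = r := by simp [v]; omega
  have huv : u = v := List.ext_getElem? fun i => by
    rcases lt_or_ge i r with hi | hi
    · rw [List.getElem?_drop, List.getElem?_take, if_pos (by omega), List.getElem?_take,
        if_pos hi, List.getElem?_drop, h.2 _ (by omega) (by omega) (by omega)]
      congr 1
      omega
    · rw [List.getElem?_eq_none (by omega), List.getElem?_eq_none (by omega)]
  refine hsf u (List.ne_nil_of_length_pos (hu ▸ h.1)) ?_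
  have hinf := (List.drop_suffix (p - r) (w.take p)).append_infix_append
    (List.take_prefix r (w.drop p))
  rw [List.take_append_drop] at hinf
  nth_rewrite 2 [huv]
  exact hinf

theorem SqFree.overhangs_one_end (hsf : SqFree w) (h : IsLocalPeriod w p r)
    (hr : ¬ HasPeriod w r) : p < r ∧ p + r < w.length ∨ r < p ∧ w.length < p + r := by
  have hfit := hsf.lt_or_lt_of_isLocalPeriod h
  have hboth : ¬ (p ≤ r ∧ w.length ≤ p + r) := fun h' => hr (h.hasPeriod h'.1 h'.2)
  omega

theorem SqFree.length_le_four_mul_sub (hsf : SqFree w) (hp : IsLocalPeriod w p r)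
    (hq : IsLocalPeriod w q s) (hr : ¬ HasPeriod w r) (hs : ¬ HasPeriod w s)
    (hpn : 2 * p < w.length) (hqn : w.length < 2 * q) : w.length ≤ 4 * (q - p) := by
  by_contra! hclose
  have hpr := hsf.overhangs_one_end hp hr
  have hqs := hsf.overhangs_one_end hq hs
  rcases lt_trichotomy r s with hrs | rfl | hsr
  · have hdiff : IsLocalPeriod w q (s - r) := ⟨by omega, fun j hjq hqj hjn => calc
      w[j]? = w[j - r + r]? := by rw [Nat.sub_add_cancel (by omega)]
      _ = w[j - r + s]? := by
        rw [← hp.2 (j - r) (by omega) (by omega) (by omega),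
          hq.2 (j - r) (by omega) (by omega) (by omega)]
      _ = w[j + (s - r)]? := by congr 1; omega⟩
    have := hsf.lt_or_lt_of_isLocalPeriod hdiff
    omega
  · exact hr ⟨hp.1, fun j hj => if hjp : j < p then hp.2 j hjp (by omega) hj
      else hq.2 j (by omega) (by omega) hj⟩
  · have hdiff : IsLocalPeriod w p (r - s) := ⟨by omega, fun j hjp hpj hjn => by
      rw [hp.2 j hjp (by omega) (by omega), hq.2 (j + (r - s)) (by omega) (by omega) (by omega),
        show j + (r - s) + s = j + r by omega]⟩
    have := hsf.lt_or_lt_of_isLocalPeriod hdiff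
    omega

end CritFact

/-- in a square-free ternary word `w` of length `n`, two non-critical
positions `p < n/2 < q` on opposite sides of the middle satisfy `q - p ≥ n/4`. -/
theorem noncritical_points_far_apart (w : CritFact.Word)
    (hsf : CritFact.SqFree w) (p q : ℕ)
    (hp : CritFact.IsPos w p) (hq : CritFact.IsPos w q)
    (hpnc : ¬ CritFact.IsCritical w p) (hqnc : ¬ CritFact.IsCritical w q)
    (h1 : (p : ℝ) < (w.length : ℝ) / 2) (h2 : (w.length : ℝ) / 2 < (q : ℝ)) :
    (w.length : ℝ) / 4 ≤ (q : ℝ) - (p : ℝ) := by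
  open CritFact in
  have hpn : 2 * p < w.length := by
    exact_mod_cast (show ((2 * p : ℕ) : ℝ) < w.length by push_cast; linarith)
  have hqn : w.length < 2 * q := by
    exact_mod_cast (show (w.length : ℝ) < (2 * q : ℕ) by push_cast; linarith)
  have hfar : w.length ≤ 4 * (q - p) := hsf.length_le_four_mul_sub
    (isLocalPeriod_locPer hp.2) (isLocalPeriod_locPer hq.2)
    (not_hasPeriod_of_lt_per (locPer_lt_per_of_not_isCritical hp hpnc))
    (not_hasPeriod_of_lt_per (locPer_lt_per_of_not_isCritical hq hqnc)) hpn hqn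
  have hfar' : (w.length : ℝ) ≤ (4 * (q - p) : ℕ) := by exact_mod_cast hfar
  push_cast [Nat.cast_sub (show p ≤ q by omega)] at hfar'
  linarith
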